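/- arXiv:2107.10142 — 3 statements merged into one kernel-verified Lean document; each statement's English description precedes it below -/
import Mathlib

section
/- Let α > 1 and E > 0 be reals, m and n positive integers, and for j = 1, …, n let V_j > 0 be reals and δ_j positive integers. For all positive reals p_1, …, p_n satisfying ∑_{j=1}^n V_j^α · p_j^{1−α} ≤ E, one has (1/m)·∑_{j=1}^n ∑_{i=1}^{j} p_i + (1/2)·∑_{j=1}^n p_j/δ_j − (1/(2m))·∑_{j=1}^n p_j ≥ (E^{1/(1−α)}/m) · ( ∑_{j=1}^n V_j · ( n−j+0.5 + 0.5·m/δ_j )^{(α−1)/α} )^{α/(α−1)}. -/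
/-!
Put `c j = n - j + 1/2 + m / (2 δ j)`. Exchanging the order of summation, the left-hand side
equals `(1 / m) ∑ c j p j`. Hölder's inequality with exponents `α` and `α / (α - 1)`, applied to
`V j * c j ^ ((α - 1) / α) = (V j p j ^ ((1 - α) / α)) * (c j p j) ^ ((α - 1) / α)`, bounds
`∑ V j c j ^ ((α - 1) / α)` by `E ^ (1 / α) (∑ c j p j) ^ ((α - 1) / α)`; raising this to the
power `α / (α - 1)` gives the claim.
-/

open Finset

theorem sum_Icc_sum_Icc_eq_sum_mul {R : Type*} [CommRing R] (p : ℕ → R) (n : ℕ) :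
    ∑ j ∈ Icc 1 n, ∑ i ∈ Icc 1 j, p i = ∑ i ∈ Icc 1 n, ((n : R) - i + 1) * p i := by
  induction n with
  | zero => simp
  | succ n ih =>
    rw [sum_Icc_succ_top (by omega), ih, sum_Icc_succ_top (by omega),
      sum_Icc_succ_top (by omega)]
    push_cast
    rw [← add_assoc, ← sum_add_distrib]
    congr 1
    · exact sum_congr rfl fun i _ => by ring
    · ring

section EnergyBudget

variable {ι : Type*} (s : Finset ι) {α : ℝ} {V c p : ι → ℝ}

theorem sum_mul_rpow_le_energy_mul_sum_mul (hα : 1 < α) (hV : ∀ j ∈ s, 0 ≤ V j)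
    (hc : ∀ j ∈ s, 0 ≤ c j) (hp : ∀ j ∈ s, 0 < p j) :
    ∑ j ∈ s, V j * c j ^ ((α - 1) / α) ≤
      (∑ j ∈ s, V j ^ α * p j ^ (1 - α)) ^ (1 / α) *
        (∑ j ∈ s, c j * p j) ^ ((α - 1) / α) := by
  have hα0 : α ≠ 0 := by linarith
  have hα1 : α - 1 ≠ 0 := by linarith
  have hconj : Real.HolderConjugate α (α / (α - 1)) := .conjExponent hα
  have holder := Real.inner_le_Lp_mul_Lq_of_nonneg s hconj
    (f := fun j => V j * p j ^ ((1 - α) / α)) (g := fun j => (c j * p j) ^ ((α - 1) / α))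
    (fun j hj => mul_nonneg (hV j hj) (Real.rpow_nonneg (hp j hj).le _))
    (fun j hj => Real.rpow_nonneg (mul_nonneg (hc j hj) (hp j hj).le) _)
  have hprod : ∀ j ∈ s, V j * p j ^ ((1 - α) / α) * (c j * p j) ^ ((α - 1) / α) =
      V j * c j ^ ((α - 1) / α) := fun j hj => by
    have hexp : (1 - α) / α + (α - 1) / α = 0 := by field_simp; ring
    rw [Real.mul_rpow (hc j hj) (hp j hj).le, mul_mul_mul_comm, ← Real.rpow_add (hp j hj),
      hexp, Real.rpow_zero, mul_one]
  have henergy : ∀ j ∈ s, (V j * p j ^ ((1 - α) / α)) ^ α = V j ^ α * p j ^ (1 - α) :=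
    fun j hj => by
      rw [Real.mul_rpow (hV j hj) (Real.rpow_nonneg (hp j hj).le _), ← Real.rpow_mul (hp j hj).le,
        div_mul_cancel₀ _ hα0]
  have hexp : (α - 1) / α * (α / (α - 1)) = 1 := by field_simp
  have hcost : ∀ j ∈ s, ((c j * p j) ^ ((α - 1) / α)) ^ (α / (α - 1)) = c j * p j :=
    fun j hj => by
      rw [← Real.rpow_mul (mul_nonneg (hc j hj) (hp j hj).le), hexp,
        Real.rpow_one]
  rwa [sum_congr rfl hprod, sum_congr rfl henergy, sum_congr rfl hcost, one_div_div] at holder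

theorem rpow_mul_rpow_le_of_le_rpow_mul_rpow (hα : 1 < α) {E A S : ℝ} (hE : 0 < E)
    (hA : 0 ≤ A) (hS : 0 ≤ S) (h : A ≤ E ^ (1 / α) * S ^ ((α - 1) / α)) :
    E ^ (1 / (1 - α)) * A ^ (α / (α - 1)) ≤ S := by
  have hα0 : α ≠ 0 := by linarith
  have hα1 : α - 1 ≠ 0 := by linarith
  have hexp : (α - 1) / α * (α / (α - 1)) = 1 := by field_simp
  have hpow : (E ^ (1 / α) * S ^ ((α - 1) / α)) ^ (α / (α - 1)) = E ^ (1 / (α - 1)) * S := by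
    rw [Real.mul_rpow (Real.rpow_nonneg hE.le _) (Real.rpow_nonneg hS _), ← Real.rpow_mul hE.le,
      ← Real.rpow_mul hS, hexp, Real.rpow_one, one_div_mul_eq_div,
      div_div_cancel_left' hα0, one_div]
  have hcancel : E ^ (1 / (1 - α)) * E ^ (1 / (α - 1)) = 1 := by
    rw [← Real.rpow_add hE, ← neg_sub α 1, div_neg, neg_add_cancel, Real.rpow_zero]
  calc E ^ (1 / (1 - α)) * A ^ (α / (α - 1))
      ≤ E ^ (1 / (1 - α)) * (E ^ (1 / (α - 1)) * S) := by
        rw [← hpow]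
        gcongr
    _ = S := by rw [← mul_assoc, hcancel, one_mul]

theorem energy_rpow_mul_sum_rpow_le_sum_mul (hα : 1 < α) {E : ℝ} (hE : 0 < E)
    (hV : ∀ j ∈ s, 0 ≤ V j) (hc : ∀ j ∈ s, 0 ≤ c j) (hp : ∀ j ∈ s, 0 < p j)
    (henergy : ∑ j ∈ s, V j ^ α * p j ^ (1 - α) ≤ E) :
    E ^ (1 / (1 - α)) * (∑ j ∈ s, V j * c j ^ ((α - 1) / α)) ^ (α / (α - 1)) ≤
      ∑ j ∈ s, c j * p j := by
  have hcost : 0 ≤ ∑ j ∈ s, c j * p j := sum_nonneg fun j hj => mul_nonneg (hc j hj) (hp j hj).le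
  refine rpow_mul_rpow_le_of_le_rpow_mul_rpow hα hE
    (sum_nonneg fun j hj => mul_nonneg (hV j hj) (Real.rpow_nonneg (hc j hj) _)) hcost ?_
  refine (sum_mul_rpow_le_energy_mul_sum_mul s hα hV hc hp).trans ?_
  have hsum : 0 ≤ ∑ j ∈ s, V j ^ α * p j ^ (1 - α) := sum_nonneg fun j hj =>
    mul_nonneg (Real.rpow_nonneg (hV j hj) _) (Real.rpow_nonneg (hp j hj).le _)
  exact mul_le_mul_of_nonneg_right
    (Real.rpow_le_rpow hsum henergy (one_div_nonneg.mpr (by linarith))) (Real.rpow_nonneg hcost _)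

end EnergyBudget

theorem moldable_lower_bound_LB_general
    (α E : ℝ) (hα : 1 < α) (hE : 0 < E) (m n : ℕ) (hm : 0 < m)
    (V : ℕ → ℝ) (δ : ℕ → ℕ)
    (hV : ∀ j ∈ Icc 1 n, 0 < V j)
    (p : ℕ → ℝ) (hp : ∀ j ∈ Icc 1 n, 0 < p j)
    (henergy : ∑ j ∈ Icc 1 n, V j ^ α * p j ^ (1 - α) ≤ E) :
    (1 / (m : ℝ)) * ∑ j ∈ Icc 1 n, ∑ i ∈ Icc 1 j, p i
        + (1 / 2) * ∑ j ∈ Icc 1 n, p j / (δ j : ℝ)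
        - (1 / (2 * (m : ℝ))) * ∑ j ∈ Icc 1 n, p j ≥
      (E ^ (1 / (1 - α)) / (m : ℝ)) *
        (∑ j ∈ Icc 1 n, V j *
          ((n : ℝ) - j + 0.5 + 0.5 * (m : ℝ) / (δ j : ℝ)) ^ ((α - 1) / α))
          ^ (α / (α - 1)) := by
  set c : ℕ → ℝ := fun j => (n : ℝ) - j + 0.5 + 0.5 * (m : ℝ) / (δ j : ℝ)
  have hm' : (m : ℝ) ≠ 0 := by positivity
  have hc : ∀ j ∈ Icc 1 n, 0 ≤ c j := fun j hj => by
    show 0 ≤ (n : ℝ) - j + 0.5 + 0.5 * (m : ℝ) / (δ j : ℝ)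
    have hjn : (j : ℝ) ≤ n := by exact_mod_cast (mem_Icc.mp hj).2
    have : 0 ≤ 0.5 * (m : ℝ) / (δ j : ℝ) := by positivity
    linarith
  have hlhs : (1 / (m : ℝ)) * ∑ j ∈ Icc 1 n, ∑ i ∈ Icc 1 j, p i
      + (1 / 2) * ∑ j ∈ Icc 1 n, p j / (δ j : ℝ)
      - (1 / (2 * (m : ℝ))) * ∑ j ∈ Icc 1 n, p j = (∑ j ∈ Icc 1 n, c j * p j) / m := by
    rw [sum_Icc_sum_Icc_eq_sum_mul, mul_sum, mul_sum, mul_sum, sum_div,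
      ← sum_add_distrib, ← sum_sub_distrib]
    refine sum_congr rfl fun j _ => ?_
    field_simp
    ring
  rw [ge_iff_le, hlhs, div_mul_eq_mul_div]
  gcongr
  exact energy_rpow_mul_sum_rpow_le_sum_mul _ hα hE (fun j hj => (hV j hj).le) hc hp henergy

/-- Lower bound for moldable jobs: any positive durations satisfying the energy budget make
the total-completion-time lower-bound expression (8) at least the closed-form bound `LB`. -/
theorem moldable_lower_bound_LB
    (α E : ℝ) (hα : 1 < α) (hE : 0 < E) (m n : ℕ) (hm : 0 < m) (hn : 0 < n)
    (V : ℕ → ℝ) (δ : ℕ → ℕ)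
    (hV : ∀ j ∈ Icc 1 n, 0 < V j) (hδ : ∀ j ∈ Icc 1 n, 0 < δ j)
    (p : ℕ → ℝ) (hp : ∀ j ∈ Icc 1 n, 0 < p j)
    (henergy : ∑ j ∈ Icc 1 n, V j ^ α * p j ^ (1 - α) ≤ E) :
    (1 / (m : ℝ)) * ∑ j ∈ Icc 1 n, ∑ i ∈ Icc 1 j, p i
        + (1 / 2) * ∑ j ∈ Icc 1 n, p j / (δ j : ℝ)
        - (1 / (2 * (m : ℝ))) * ∑ j ∈ Icc 1 n, p j ≥
      (E ^ (1 / (1 - α)) / (m : ℝ)) *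
        (∑ j ∈ Icc 1 n, V j *
          ((n : ℝ) - j + 0.5 + 0.5 * (m : ℝ) / (δ j : ℝ)) ^ ((α - 1) / α))
          ^ (α / (α - 1)) :=
  moldable_lower_bound_LB_general α E hα hE m n hm V δ hV p hp henergy
end

section
/- Let α > 1 be real, V > 0 real, m and n positive integers, and δ_1 ≤ δ_2 ≤ … ≤ δ_n positive integers. For every permutation π of {1, …, n}: ∑_{j=1}^n V·( n−j+0.5 + 0.5·m/δ_j )^{(α−1)/α} ≤ ∑_{j=1}^n V·( n−j+0.5 + 0.5·m/δ_{π(j)} )^{(α−1)/α}; that is, when all processing volumes are identical, the sum ∑_{j=1}^n V_{π_j}·( n−j+0.5 + 0.5·m/δ_{π_j} )^{(α−1)/α} over orderings of the jobs is minimized by ordering the jobs by non-decreasing maximum processor numbers δ_j. -/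
/-!
The summand is `h (a j + b (π j))` with `h = x ↦ x ^ ((α - 1) / α)` concave on `[0, ∞)`,
`a j = n - j - 1/2` and `b j = m / (2 δ j)` both antitone. Concavity makes the array
`F i j = h (a i + b j)` a Monge array, `F i j + F i' j' ≤ F i j' + F i' j` for `i ≤ i'`, `j ≤ j'`,
and for a Monge array the identity is an optimal assignment: if `x` is the least point moved by `σ`,
composing with the transposition of `x` and `σ x` fixes `x` and, by the Monge inequality, does not
increase the sum, so induction on the size of the support applies.
-/

open Finset Equiv

def IsMonge {ι β : Type*} [Preorder ι] [Add β] [LE β] (F : ι → ι → β) : Prop :=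
  ∀ ⦃i i' j j'⦄, i ≤ i' → j ≤ j' → F i j + F i' j' ≤ F i j' + F i' j

theorem IsMonge.sum_apply_self_le_sum_apply_perm {ι β : Type*} [LinearOrder ι] [Fintype ι]
    [AddCommGroup β] [PartialOrder β] [IsOrderedAddMonoid β] {F : ι → ι → β} (hF : IsMonge F)
    (σ : Perm ι) : ∑ i, F i i ≤ ∑ i, F i (σ i) := by
  induction hk : #σ.support using Nat.strong_induction_on generalizing σ with
  | _ k ih =>
  obtain hσ | hσ := σ.support.eq_empty_or_nonempty
  · simp [Perm.support_eq_empty_iff.1 hσ]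
  set x := σ.support.min' hσ
  set y := σ.symm x
  have hx : x ∈ σ.support := min'_mem _ hσ
  have hσy : σ y = x := σ.apply_symm_apply x
  have hyx : y ≠ x := fun h => Perm.mem_support.1 hx (h ▸ hσy)
  have hxy : x ≤ y := min'_le _ _ (Perm.mem_support.2 (hσy ▸ hyx.symm))
  have hxσx : x ≤ σ x := min'_le _ _ (Perm.apply_mem_support.2 hx)
  calc ∑ i, F i i ≤ ∑ i, F i ((swap x (σ x) * σ) i) :=
        ih _ (hk ▸ Perm.card_support_swap_mul (Perm.mem_support.1 hx)) _ rfl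
    _ ≤ ∑ i, F i (σ i) := by
      rw [← sub_nonneg, ← sum_sub_distrib, Fintype.sum_eq_add x y hyx.symm]
      · rw [Perm.mul_apply, Perm.mul_apply, swap_apply_right, hσy, swap_apply_left,
          sub_add_sub_comm, sub_nonneg]
        exact hF hxy hxσx
      · rintro i ⟨hix, hiy⟩
        rw [Perm.mul_apply, swap_apply_of_ne_of_ne _ (σ.injective.ne hix), sub_self]
        exact fun h => hiy (σ.eq_symm_apply.2 h)

theorem ConcaveOn.map_add_add_add_map_le {s : Set ℝ} {h : ℝ → ℝ} (hh : ConcaveOn ℝ s h)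
    {x d e : ℝ} (hx : x ∈ s) (hxde : x + d + e ∈ s) (hd : 0 ≤ d) (he : 0 ≤ e) :
    h (x + d + e) + h x ≤ h (x + d) + h (x + e) := by
  rcases (add_nonneg hd he).eq_or_lt with hde | hde
  · obtain ⟨rfl, rfl⟩ : d = 0 ∧ e = 0 := ⟨by linarith, by linarith⟩
    simp
  -- `x + d` and `x + e` are the convex combinations of `x + d + e` and `x` with swapped weights
  obtain ⟨t, ht₀, ht₁, htd⟩ : ∃ t : ℝ, 0 ≤ t ∧ 0 ≤ 1 - t ∧ t * (d + e) = d :=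
    ⟨d / (d + e), by positivity, by rw [sub_nonneg, div_le_one hde]; linarith,
      div_mul_cancel₀ d hde.ne'⟩
  have h₁ := hh.2 hxde hx ht₀ ht₁ (add_sub_cancel t 1)
  have h₂ := hh.2 hxde hx ht₁ ht₀ (sub_add_cancel 1 t)
  have hxd : t * (x + d + e) + (1 - t) * x = x + d := by linear_combination htd
  have hxe : (1 - t) * (x + d + e) + t * x = x + e := by linear_combination -htd
  simp only [smul_eq_mul, hxd, hxe] at h₁ h₂
  linarith

theorem ConcaveOn.isMonge_comp_add {ι : Type*} [Preorder ι] {s : Set ℝ} {h : ℝ → ℝ}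
    (hh : ConcaveOn ℝ s h) {a b : ι → ℝ} (ha : Antitone a) (hb : Antitone b)
    (hs : ∀ i j, a i + b j ∈ s) : IsMonge fun i j => h (a i + b j) := by
  intro i i' j j' hi hj
  have hd : a i' + b j' + (a i - a i') = a i + b j' := by ring
  have he : a i' + b j' + (b j - b j') = a i' + b j := by ring
  have hde : a i' + b j' + (a i - a i') + (b j - b j') = a i + b j := by ring
  have key := hh.map_add_add_add_map_le (hs i' j') (hde ▸ hs i j) (sub_nonneg.2 (ha hi))
    (sub_nonneg.2 (hb hj))
  rw [hde, hd, he] at key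
  exact key

theorem moldable_sequence_optimal_general
    (α V : ℝ) (hα : 1 < α) (hV : 0 < V) (m n : ℕ)
    (δ : Fin n → ℕ) (hpos : ∀ j, 0 < δ j) (hmono : Monotone δ)
    (π : Equiv.Perm (Fin n)) :
    ∑ j : Fin n, V *
        ((n : ℝ) - ((j : ℕ) + 1) + 0.5 + 0.5 * (m : ℝ) / (δ j : ℝ)) ^ ((α - 1) / α) ≤
      ∑ j : Fin n, V *
        ((n : ℝ) - ((j : ℕ) + 1) + 0.5 + 0.5 * (m : ℝ) / (δ (π j) : ℝ)) ^ ((α - 1) / α) := by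
  have hconc : ConcaveOn ℝ (Set.Ici 0) fun x : ℝ => x ^ ((α - 1) / α) :=
    Real.concaveOn_rpow (div_nonneg (by linarith) (by linarith))
      ((div_le_one (by linarith)).2 (by linarith))
  have ha : Antitone fun j : Fin n => (n : ℝ) - ((j : ℕ) + 1) + 0.5 := fun i j hij => by
    have : ((i : ℕ) : ℝ) ≤ (j : ℕ) := by exact_mod_cast hij
    linarith
  have hb : Antitone fun j => 0.5 * (m : ℝ) / (δ j : ℝ) := fun i j hij =>
    div_le_div_of_nonneg_left (by positivity) (by exact_mod_cast hpos i)
      (by exact_mod_cast hmono hij)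
  have hab (i j : Fin n) :
      (n : ℝ) - ((i : ℕ) + 1) + 0.5 + 0.5 * (m : ℝ) / (δ j : ℝ) ∈ Set.Ici 0 := by
    have : ((i : ℕ) : ℝ) + 1 ≤ n := by exact_mod_cast i.isLt
    have : 0 ≤ 0.5 * (m : ℝ) / (δ j : ℝ) := by positivity
    simp only [Set.mem_Ici]
    linarith
  rw [← mul_sum, ← mul_sum]
  exact mul_le_mul_of_nonneg_left
    ((hconc.isMonge_comp_add ha hb hab).sum_apply_self_le_sum_apply_perm π) hV.le

/-- For moldable jobs with identical volumes, the sum defining the lower bound `LB` is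
minimized by ordering the jobs by non-decreasing maximum processor numbers `δ_j`. -/
theorem moldable_sequence_optimal
    (α V : ℝ) (hα : 1 < α) (hV : 0 < V) (m n : ℕ) (hm : 0 < m) (hn : 0 < n)
    (δ : Fin n → ℕ) (hpos : ∀ j, 0 < δ j) (hmono : Monotone δ)
    (π : Equiv.Perm (Fin n)) :
    ∑ j : Fin n, V *
        ((n : ℝ) - ((j : ℕ) + 1) + 0.5 + 0.5 * (m : ℝ) / (δ j : ℝ)) ^ ((α - 1) / α) ≤
      ∑ j : Fin n, V *
        ((n : ℝ) - ((j : ℕ) + 1) + 0.5 + 0.5 * (m : ℝ) / (δ (π j) : ℝ)) ^ ((α - 1) / α) :=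
  moldable_sequence_optimal_general α V hα hV m n δ hpos hmono π
end

section
/- For every real α > 1 and all positive reals p_1, p_2, p_3 satisfying p_1^{1−α} + p_2^{1−α} + p_3^{1−α} = 3, one has 3·p_1 + 2·p_2 + p_3 ≥ ( (3^{(α−1)/α} + 2^{(α−1)/α} + 1)^α / 3 )^{1/(α−1)}. -/
/-!
Hölder's inequality with the conjugate exponents `α / (α - 1)` and `α`, applied to
`w i ^ ((α - 1) / α) = (w i * p i) ^ ((α - 1) / α) * p i ^ ((1 - α) / α)`, gives
`S ≤ T ^ ((α - 1) / α) * E ^ (1 / α)` for `S = ∑ w i ^ ((α - 1) / α)`, `T = ∑ w i * p i` and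
`E = ∑ p i ^ (1 - α)`. Raising to the power `α` yields `S ^ α ≤ T ^ (α - 1) * E`, which is the
bound; the theorem is the case of the weights `3, 2, 1` and energy `E = 3`.
-/

open Finset Real

variable {ι : Type*} (s : Finset ι) {α : ℝ} {w p : ι → ℝ}

theorem sum_rpow_le_sum_mul_rpow_mul_sum_rpow (hα : 1 < α) (hw : ∀ i ∈ s, 0 ≤ w i)
    (hp : ∀ i ∈ s, 0 < p i) :
    ∑ i ∈ s, w i ^ ((α - 1) / α) ≤
      (∑ i ∈ s, w i * p i) ^ ((α - 1) / α) * (∑ i ∈ s, p i ^ (1 - α)) ^ (1 / α) := by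
  have hα₀ : α ≠ 0 := by positivity
  have hα₁ : α - 1 ≠ 0 := sub_ne_zero.mpr hα.ne'
  have hconj : (α / (α - 1)).HolderConjugate α := .symm (.conjExponent hα)
  have hsplit : ∀ i ∈ s, w i ^ ((α - 1) / α) =
      (w i * p i) ^ ((α - 1) / α) * p i ^ ((1 - α) / α) := by
    intro i hi
    have hexp : (α - 1) / α + (1 - α) / α = 0 := by ring
    rw [mul_rpow (hw i hi) (hp i hi).le, mul_assoc, ← rpow_add (hp i hi), hexp, rpow_zero,
      mul_one]
  have hf : ∀ i ∈ s, ((w i * p i) ^ ((α - 1) / α)) ^ (α / (α - 1)) = w i * p i := by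
    intro i hi
    have hexp : (α - 1) / α * (α / (α - 1)) = 1 := by field_simp
    rw [← rpow_mul (mul_nonneg (hw i hi) (hp i hi).le), hexp, rpow_one]
  have hg : ∀ i ∈ s, (p i ^ ((1 - α) / α)) ^ α = p i ^ (1 - α) := by
    intro i hi
    rw [← rpow_mul (hp i hi).le, div_mul_cancel₀ _ hα₀]
  have holder := inner_le_Lp_mul_Lq_of_nonneg s hconj
    (f := fun i ↦ (w i * p i) ^ ((α - 1) / α)) (g := fun i ↦ p i ^ ((1 - α) / α))
    (fun i hi ↦ by have := hw i hi; have := hp i hi; positivity)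
    (fun i hi ↦ by have := hp i hi; positivity)
  rwa [← sum_congr rfl hsplit, sum_congr rfl hf, sum_congr rfl hg, one_div_div] at holder

theorem rpow_sum_rpow_div_sum_rpow_le_sum_mul (hα : 1 < α) (hw : ∀ i ∈ s, 0 ≤ w i)
    (hp : ∀ i ∈ s, 0 < p i) :
    ((∑ i ∈ s, w i ^ ((α - 1) / α)) ^ α / ∑ i ∈ s, p i ^ (1 - α)) ^ (1 / (α - 1)) ≤
      ∑ i ∈ s, w i * p i := by
  have hα₀ : α ≠ 0 := by positivity
  have hα₁ : α - 1 ≠ 0 := sub_ne_zero.mpr hα.ne'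
  have hT : 0 ≤ ∑ i ∈ s, w i * p i :=
    sum_nonneg fun i hi ↦ mul_nonneg (hw i hi) (hp i hi).le
  have hE : 0 ≤ ∑ i ∈ s, p i ^ (1 - α) := sum_nonneg fun i hi ↦ (rpow_pos_of_pos (hp i hi) _).le
  have hS : 0 ≤ ∑ i ∈ s, w i ^ ((α - 1) / α) := sum_nonneg fun i hi ↦ rpow_nonneg (hw i hi) _
  have hpow : (∑ i ∈ s, w i ^ ((α - 1) / α)) ^ α ≤
      (∑ i ∈ s, w i * p i) ^ (α - 1) * ∑ i ∈ s, p i ^ (1 - α) := by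
    calc (∑ i ∈ s, w i ^ ((α - 1) / α)) ^ α
        ≤ ((∑ i ∈ s, w i * p i) ^ ((α - 1) / α) * (∑ i ∈ s, p i ^ (1 - α)) ^ (1 / α)) ^ α :=
          rpow_le_rpow hS (sum_rpow_le_sum_mul_rpow_mul_sum_rpow s hα hw hp) (by positivity)
      _ = _ := by
          rw [mul_rpow (by positivity) (by positivity), ← rpow_mul hT, ← rpow_mul hE,
            div_mul_cancel₀ _ hα₀, one_div_mul_cancel hα₀, rpow_one]
  calc _ ≤ ((∑ i ∈ s, w i * p i) ^ (α - 1)) ^ (1 / (α - 1)) :=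
        rpow_le_rpow (by positivity) (div_le_of_le_mul₀ hE (by positivity) hpow)
          (one_div_nonneg.mpr (by linarith))
    _ = _ := by rw [one_div, rpow_rpow_inv hT hα₁]

/-- Lower bound of the auxiliary convex program in the NP-hardness proof of Theorem 4:
for `α > 1` and positive `p₁, p₂, p₃` with `p₁^(1-α) + p₂^(1-α) + p₃^(1-α) = 3`, one has
`3·p₁ + 2·p₂ + p₃ ≥ ((3^((α-1)/α) + 2^((α-1)/α) + 1)^α / 3)^(1/(α-1))`. -/
theorem convex_program_lower_bound_dedicated
    (α : ℝ) (hα : 1 < α) (p₁ p₂ p₃ : ℝ)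
    (h₁ : 0 < p₁) (h₂ : 0 < p₂) (h₃ : 0 < p₃)
    (henergy : p₁ ^ (1 - α) + p₂ ^ (1 - α) + p₃ ^ (1 - α) = 3) :
    3 * p₁ + 2 * p₂ + p₃ ≥
      (((3 : ℝ) ^ ((α - 1) / α) + (2 : ℝ) ^ ((α - 1) / α) + 1) ^ α / 3) ^ (1 / (α - 1)) := by
  have h := rpow_sum_rpow_div_sum_rpow_le_sum_mul univ hα (w := ![3, 2, 1]) (p := ![p₁, p₂, p₃])
    (by simp [Fin.forall_fin_succ]) (by simp [Fin.forall_fin_succ, h₁, h₂, h₃])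
  simpa [Fin.sum_univ_three, henergy] using h
end
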